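/- Let $r \geq 2$ and $a_1, \dots, a_r \in \mathbb{Z}_{\geq 0}$ with $a_1 \geq 1$, and let $A \geq 1$. Then $\int_{1 \leq x_1 < (\log B)^A} x_1^{a_1 - 1} \Big( \int_{\substack{1 \leq x_i \leq B \ (2 \leq i \leq r) \\ \prod_{i=2}^r x_i^{a_i} \leq B / x_1^{a_1}}} \prod_{i=2}^r x_i^{a_i - 1} \, dx_2 \cdots dx_r \Big) dx_1 = O_A\big( B (\log B)^{r-2} \log\log B + (\log B)^{r - 1 + A a_1} \big)$ as $B \to \infty$, where the first term suffices when $(a_2,\dots,a_r) \neq (0,\dots,0)$ and the second when $(a_2,\dots,a_r) = (0,\dots,0)$. -/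

import Mathlib

/-!
Fix a coordinate `j` with `a j ≥ 1` and confine the other coordinates to a box `∏ [1, Uᵢ]`. On
the region `∏ xᵢ ^ aᵢ ≤ K`, integrating `x_j ^ (a_j - 1)` over `x_j` gives at most
`K / ∏_{i ≠ j} xᵢ ^ aᵢ`, which leaves `K ∏_{i ≠ j} xᵢ⁻¹` to integrate over the box: the result
is `K ∏_{i ≠ j} log Uᵢ`. If some `a_j ≥ 1` with `j ≠ i₀`, the boundary region lies in such a
region with `K = B` and the box `[1, (log B)^A] × [1, B]^(r-2)`, which gives
`A · B (log B)^(r-2) log log B`. Otherwise take `j = i₀`, `K = (log B)^(A a_{i₀})` and the box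
`[1, B]^(r-1)`.
-/

open Finset Real MeasureTheory

open scoped ENNReal

theorem integral_le_toReal_lintegral_ofReal {α : Type*} [MeasurableSpace α] {μ : Measure α}
    (f : α → ℝ) : ∫ a, f a ∂μ ≤ (∫⁻ a, ENNReal.ofReal (f a) ∂μ).toReal := by
  by_cases hf : Integrable f μ
  · rw [integral_eq_lintegral_pos_part_sub_lintegral_neg_part hf]
    exact sub_le_self _ ENNReal.toReal_nonneg
  · rw [integral_undef hf]
    exact ENNReal.toReal_nonneg

theorem Fin.prod_erase_eq_prod_succAbove {M : Type*} [CommMonoid M] {n : ℕ}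
    (f : Fin (n + 1) → M) (j : Fin (n + 1)) :
    ∏ i ∈ univ.erase j, f i = ∏ i, f (j.succAbove i) := by
  rw [Fin.univ_succAbove n j, erase_cons, prod_map, Fin.coe_succAboveEmb]

theorem prod_erase_apply_update_const {ι α M : Type*} [Fintype ι] [DecidableEq ι] [CommMonoid M]
    (g : α → M) {i₀ j : ι} (h : i₀ ≠ j) (b c : α) :
    ∏ i ∈ univ.erase j, g (Function.update (fun _ => b) i₀ c i)
      = g c * g b ^ (Fintype.card ι - 2) := by
  rw [← mul_prod_erase _ _ (mem_erase.2 ⟨h, mem_univ i₀⟩), Function.update_self]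
  congr 1
  rw [prod_congr rfl fun i hi => by rw [Function.update_of_ne (ne_of_mem_erase hi)],
    prod_const, card_erase_of_mem (mem_erase.2 ⟨h, mem_univ i₀⟩),
    card_erase_of_mem (mem_univ j), card_univ, Nat.sub_sub]

theorem lintegral_eq_lintegral_insertNth {α : Type*} [MeasureSpace α]
    [SigmaFinite (volume : Measure α)] {n : ℕ} (j : Fin (n + 1))
    {f : (Fin (n + 1) → α) → ℝ≥0∞} (hf : Measurable f) :
    ∫⁻ x, f x = ∫⁻ y : Fin n → α, ∫⁻ t, f (j.insertNth t y) := by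
  rw [← (volume_preserving_piFinSuccAbove (fun _ => α) j).symm.lintegral_comp hf,
    Measure.volume_eq_prod]
  exact lintegral_prod_symm' _ (hf.comp (MeasurableEquiv.measurable _))

theorem integral_Icc_inv {c : ℝ} (hc : 1 ≤ c) : ∫ t in Set.Icc 1 c, t⁻¹ = log c := by
  rw [integral_Icc_eq_integral_Ioc, ← intervalIntegral.integral_of_le hc,
    integral_inv_of_pos one_pos (by linarith), div_one]

theorem lintegral_prod_indicator_Icc_inv {ι : Type*} [Fintype ι] {U : ι → ℝ}
    (hU : ∀ i, 1 ≤ U i) :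
    ∫⁻ y : ι → ℝ, ENNReal.ofReal (∏ i, (Set.Icc 1 (U i)).indicator (·⁻¹) (y i))
      = ENNReal.ofReal (∏ i, log (U i)) := by
  have hint : ∀ i, Integrable ((Set.Icc 1 (U i)).indicator fun t : ℝ => t⁻¹) := fun i =>
    ((continuousOn_inv₀.mono fun t ht => (zero_lt_one.trans_le ht.1).ne').integrableOn_Icc
      ).integrable_indicator measurableSet_Icc
  have hnonneg : ∀ i t, 0 ≤ (Set.Icc 1 (U i)).indicator (fun t : ℝ => t⁻¹) t := fun i =>
    Set.indicator_nonneg fun t ht => inv_nonneg.2 (zero_le_one.trans ht.1)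
  rw [volume_pi, ← ofReal_integral_eq_lintegral_ofReal (Integrable.fintype_prod hint)
    (ae_of_all _ fun y => prod_nonneg fun i _ => hnonneg i (y i)),
    integral_fintype_prod_eq_prod]
  congr 1
  refine prod_congr rfl fun i _ => ?_
  rw [integral_indicator measurableSet_Icc, integral_Icc_inv (hU i)]

theorem setLIntegral_Icc_rpow_sub_one_le {m : ℕ} (hm : 1 ≤ m) (c : ℝ) :
    ∫⁻ t in Set.Icc 1 c, ENNReal.ofReal (t ^ ((m : ℝ) - 1)) ≤ ENNReal.ofReal (c ^ m) := by
  rcases lt_or_ge c 1 with hc | hc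
  · simp [Set.Icc_eq_empty_of_lt hc]
  have hc0 : 0 < c := zero_lt_one.trans_le hc
  have hexp : (0 : ℝ) ≤ (m : ℝ) - 1 := by simpa using (Nat.one_le_cast (α := ℝ)).2 hm
  calc ∫⁻ t in Set.Icc 1 c, ENNReal.ofReal (t ^ ((m : ℝ) - 1))
      ≤ ∫⁻ _ in Set.Icc 1 c, ENNReal.ofReal (c ^ ((m : ℝ) - 1)) :=
        setLIntegral_mono measurable_const fun t ht => ENNReal.ofReal_le_ofReal <|
          rpow_le_rpow (zero_le_one.trans ht.1) ht.2 hexp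
    _ = ENNReal.ofReal (c ^ ((m : ℝ) - 1) * (c - 1)) := by
        rw [setLIntegral_const, volume_Icc, ENNReal.ofReal_mul (rpow_nonneg hc0.le _)]
    _ ≤ ENNReal.ofReal (c ^ ((m : ℝ) - 1) * c) := by gcongr; linarith
    _ = ENNReal.ofReal (c ^ m) := by rw [← rpow_add_one hc0.ne', sub_add_cancel, rpow_natCast]

theorem setLIntegral_rpow_sub_one_le_of_pow_le {m : ℕ} (hm : 1 ≤ m) (D : ℝ) :
    ∫⁻ t in {t : ℝ | 1 ≤ t ∧ t ^ m ≤ D}, ENNReal.ofReal (t ^ ((m : ℝ) - 1))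
      ≤ ENNReal.ofReal D := by
  rcases lt_or_ge D 0 with hD | hD
  · have : {t : ℝ | 1 ≤ t ∧ t ^ m ≤ D} = ∅ := Set.eq_empty_of_forall_notMem fun t ⟨h1, h2⟩ =>
      (hD.trans_le (pow_nonneg (zero_le_one.trans h1) _)).not_ge h2
    simp [this]
  set c := D ^ (m⁻¹ : ℝ)
  have hcm : c ^ m = D := rpow_inv_natCast_pow hD (by omega)
  have hsub : {t : ℝ | 1 ≤ t ∧ t ^ m ≤ D} ⊆ Set.Icc 1 c := fun t ⟨h1, h2⟩ =>
    ⟨h1, (pow_le_pow_iff_left₀ (zero_le_one.trans h1) (rpow_nonneg hD _) (by omega)).1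
      (hcm ▸ h2)⟩
  calc _ ≤ _ := lintegral_mono_set hsub
    _ ≤ _ := hcm ▸ setLIntegral_Icc_rpow_sub_one_le hm c

def hyperbolicRegion {ι : Type*} [Fintype ι] (a : ι → ℕ) (j : ι) (U : ι → ℝ) (K : ℝ) :
    Set (ι → ℝ) :=
  {x | 1 ≤ x j ∧ (∀ i ≠ j, 1 ≤ x i ∧ x i ≤ U i) ∧ ∏ i, x i ^ a i ≤ K}

theorem measurableSet_hyperbolicRegion {ι : Type*} [Fintype ι] (a : ι → ℕ) (j : ι)
    (U : ι → ℝ) (K : ℝ) : MeasurableSet (hyperbolicRegion a j U K) := by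
  unfold hyperbolicRegion
  measurability

section HyperbolicRegion

variable {n : ℕ} (a : Fin (n + 1) → ℕ) {j : Fin (n + 1)}

theorem indicator_hyperbolicRegion_insertNth_le (U : Fin (n + 1) → ℝ) (K : ℝ) (y : Fin n → ℝ)
    (t : ℝ) :
    (hyperbolicRegion a j U K).indicator
        (fun x => ENNReal.ofReal (∏ i, x i ^ ((a i : ℝ) - 1))) (j.insertNth t y)
      ≤ {t : ℝ | 1 ≤ t ∧ t ^ a j * ∏ i, y i ^ a (j.succAbove i) ≤ K}.indicator
          (fun t => ENNReal.ofReal (t ^ ((a j : ℝ) - 1))) t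
        * ENNReal.ofReal (∏ i, y i ^ ((a (j.succAbove i) : ℝ) - 1)) := by
  by_cases hx : j.insertNth t y ∈ hyperbolicRegion a j U K
  · have ht : 1 ≤ t := by simpa using hx.1
    have hK := hx.2.2
    rw [Fin.prod_univ_succAbove _ j] at hK
    simp only [Fin.insertNth_apply_same, Fin.insertNth_apply_succAbove] at hK
    rw [Set.indicator_of_mem hx, Set.indicator_of_mem (by exact ⟨ht, hK⟩),
      Fin.prod_univ_succAbove _ j]
    simp only [Fin.insertNth_apply_same, Fin.insertNth_apply_succAbove]
    rw [ENNReal.ofReal_mul (rpow_nonneg (zero_le_one.trans ht) _)]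
  · simp [Set.indicator_of_notMem hx]

theorem lintegral_indicator_hyperbolicRegion_insertNth_le (hj : 1 ≤ a j) (U : Fin (n + 1) → ℝ)
    (K : ℝ) (y : Fin n → ℝ) :
    ∫⁻ t, (hyperbolicRegion a j U K).indicator
        (fun x => ENNReal.ofReal (∏ i, x i ^ ((a i : ℝ) - 1))) (j.insertNth t y)
      ≤ ENNReal.ofReal
          (K * ∏ i, (Set.Icc 1 (U (j.succAbove i))).indicator (·⁻¹) (y i)) := by
  by_cases hy : ∀ i, y i ∈ Set.Icc 1 (U (j.succAbove i))
  swap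
  · have hout : ∀ t, j.insertNth t y ∉ hyperbolicRegion a j U K := fun t hx =>
      hy fun i => by simpa using hx.2.1 (j.succAbove i) (j.succAbove_ne i)
    simp [Set.indicator_of_notMem (hout _)]
  have hy0 : ∀ i, 0 < y i := fun i => zero_lt_one.trans_le (hy i).1
  set P := ∏ i, y i ^ a (j.succAbove i)
  set Q := ∏ i, y i ^ ((a (j.succAbove i) : ℝ) - 1)
  have hP : 0 < P := prod_pos fun i _ => pow_pos (hy0 i) _
  have hQ : Q = P * ∏ i, (y i)⁻¹ := by
    rw [← prod_mul_distrib]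
    refine prod_congr rfl fun i _ => ?_
    rw [rpow_sub_one (hy0 i).ne', rpow_natCast, div_eq_mul_inv]
  have hQ0 : 0 ≤ Q := prod_nonneg fun i _ => rpow_nonneg (hy0 i).le _
  have hfibre : {t : ℝ | 1 ≤ t ∧ t ^ a j * P ≤ K} = {t : ℝ | 1 ≤ t ∧ t ^ a j ≤ K / P} := by
    simp_rw [le_div_iff₀ hP]
  calc _ ≤ ∫⁻ t, {t : ℝ | 1 ≤ t ∧ t ^ a j * P ≤ K}.indicator
          (fun t => ENNReal.ofReal (t ^ ((a j : ℝ) - 1))) t * ENNReal.ofReal Q :=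
        lintegral_mono fun t => indicator_hyperbolicRegion_insertNth_le a U K y t
    _ = (∫⁻ t in {t : ℝ | 1 ≤ t ∧ t ^ a j ≤ K / P}, ENNReal.ofReal (t ^ ((a j : ℝ) - 1)))
          * ENNReal.ofReal Q := by
        rw [lintegral_mul_const, lintegral_indicator, hfibre] <;> measurability
    _ ≤ ENNReal.ofReal (K / P) * ENNReal.ofReal Q := by
        gcongr
        exact setLIntegral_rpow_sub_one_le_of_pow_le hj _
    _ = _ := by
        rw [← ENNReal.ofReal_mul' hQ0, hQ, prod_congr rfl fun i _ => Set.indicator_of_mem (hy i) _]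
        field_simp

theorem setLIntegral_hyperbolicRegion_le (hj : 1 ≤ a j) {U : Fin (n + 1) → ℝ}
    (hU : ∀ i ≠ j, 1 ≤ U i) (K : ℝ) :
    ∫⁻ x in hyperbolicRegion a j U K, ENNReal.ofReal (∏ i, x i ^ ((a i : ℝ) - 1))
      ≤ ENNReal.ofReal (K * ∏ i ∈ univ.erase j, log (U i)) := by
  have hU' : ∀ i, 1 ≤ U (j.succAbove i) := fun i => hU _ (j.succAbove_ne i)
  have hf : Measurable fun x : Fin (n + 1) → ℝ => ENNReal.ofReal (∏ i, x i ^ ((a i : ℝ) - 1)) :=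
    by measurability
  calc _ = ∫⁻ y : Fin n → ℝ, ∫⁻ t, (hyperbolicRegion a j U K).indicator
          (fun x => ENNReal.ofReal (∏ i, x i ^ ((a i : ℝ) - 1))) (j.insertNth t y) := by
        rw [← lintegral_indicator (measurableSet_hyperbolicRegion a j U K)]
        exact lintegral_eq_lintegral_insertNth j (hf.indicator (measurableSet_hyperbolicRegion ..))
    _ ≤ ∫⁻ y : Fin n → ℝ, ENNReal.ofReal K *
          ENNReal.ofReal (∏ i, (Set.Icc 1 (U (j.succAbove i))).indicator (·⁻¹) (y i)) :=
        lintegral_mono fun y => (lintegral_indicator_hyperbolicRegion_insertNth_le a hj U K y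
          ).trans_eq <| ENNReal.ofReal_mul' <| prod_nonneg fun i _ =>
            Set.indicator_nonneg (fun t ht => inv_nonneg.2 (zero_le_one.trans ht.1)) _
    _ = ENNReal.ofReal (K * ∏ i ∈ univ.erase j, log (U i)) := by
        rw [lintegral_const_mul' _ _ ENNReal.ofReal_ne_top, lintegral_prod_indicator_Icc_inv hU',
          ← ENNReal.ofReal_mul' (prod_nonneg fun i _ => log_nonneg (hU' i)),
          Fin.prod_erase_eq_prod_succAbove]

theorem setIntegral_le_of_subset_hyperbolicRegion (hj : 1 ≤ a j) {U : Fin (n + 1) → ℝ}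
    (hU : ∀ i ≠ j, 1 ≤ U i) {K : ℝ} (hK : 0 ≤ K) {S : Set (Fin (n + 1) → ℝ)}
    (hS : S ⊆ hyperbolicRegion a j U K) :
    ∫ x in S, ∏ i, x i ^ ((a i : ℝ) - 1) ≤ K * ∏ i ∈ univ.erase j, log (U i) :=
  (integral_le_toReal_lintegral_ofReal _).trans <| ENNReal.toReal_le_of_le_ofReal
    (mul_nonneg hK (prod_nonneg fun i hi => log_nonneg (hU i (ne_of_mem_erase hi))))
    ((lintegral_mono_set hS).trans (setLIntegral_hyperbolicRegion_le a hj hU K))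

end HyperbolicRegion

def boundaryRegion {ι : Type*} [Fintype ι] [DecidableEq ι] (a : ι → ℕ) (i₀ : ι) (T B : ℝ) :
    Set (ι → ℝ) :=
  {x | 1 ≤ x i₀ ∧ x i₀ < T ∧ (∀ i, i ≠ i₀ → 1 ≤ x i ∧ x i ≤ B) ∧
    ∏ i ∈ univ.erase i₀, x i ^ a i ≤ B / x i₀ ^ a i₀}

section Boundary

variable {ι : Type*} [Fintype ι] [DecidableEq ι] {a : ι → ℕ} {i₀ : ι} {T B : ℝ}

theorem boundaryRegion_subset_hyperbolicRegion_self (h0 : ∀ i ≠ i₀, a i = 0) :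
    boundaryRegion a i₀ T B ⊆ hyperbolicRegion a i₀ (fun _ => B) (T ^ a i₀) := by
  rintro x ⟨h1, hT, hbox, -⟩
  refine ⟨h1, hbox, ?_⟩
  rw [← mul_prod_erase _ _ (mem_univ i₀),
    prod_eq_one fun i hi => by rw [h0 i (ne_of_mem_erase hi), pow_zero], mul_one]
  exact pow_le_pow_left₀ (zero_le_one.trans h1) hT.le _

theorem boundaryRegion_subset_hyperbolicRegion {j : ι} (hj : j ≠ i₀) :
    boundaryRegion a i₀ T B ⊆ hyperbolicRegion a j (Function.update (fun _ => B) i₀ T) B := by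
  rintro x ⟨h1, hT, hbox, hprod⟩
  refine ⟨(hbox j hj).1, fun i hi => ?_, ?_⟩
  · rcases eq_or_ne i i₀ with rfl | hi₀
    · simpa using ⟨h1, hT.le⟩
    · simpa [hi₀] using hbox i hi₀
  · have hx : 0 < x i₀ ^ a i₀ := pow_pos (zero_lt_one.trans_le h1) _
    rw [← mul_prod_erase _ _ (mem_univ i₀)]
    calc _ ≤ x i₀ ^ a i₀ * (B / x i₀ ^ a i₀) := by gcongr
      _ = B := mul_div_cancel₀ _ hx.ne'

end Boundary

theorem setIntegral_boundaryRegion_le_of_forall_ne_eq_zero {n : ℕ} {a : Fin (n + 1) → ℕ}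
    {i₀ : Fin (n + 1)} (ha : 1 ≤ a i₀) (h0 : ∀ i ≠ i₀, a i = 0) {T B : ℝ} (hT : 0 ≤ T)
    (hB : 1 ≤ B) :
    ∫ x in boundaryRegion a i₀ T B, ∏ i, x i ^ ((a i : ℝ) - 1) ≤ T ^ a i₀ * log B ^ n := by
  have := setIntegral_le_of_subset_hyperbolicRegion a ha (fun _ _ => hB) (by positivity)
    (boundaryRegion_subset_hyperbolicRegion_self (T := T) h0)
  rwa [prod_const, card_erase_of_mem (mem_univ _), card_univ, Fintype.card_fin,
    Nat.add_sub_cancel] at this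

theorem setIntegral_boundaryRegion_le_of_ne {n : ℕ} {a : Fin (n + 1) → ℕ} {i₀ j : Fin (n + 1)}
    (hj : j ≠ i₀) (haj : 1 ≤ a j) {T B : ℝ} (hT : 1 ≤ T) (hB : 1 ≤ B) :
    ∫ x in boundaryRegion a i₀ T B, ∏ i, x i ^ ((a i : ℝ) - 1)
      ≤ B * (log T * log B ^ (n - 1)) := by
  have hU : ∀ i ≠ j, 1 ≤ Function.update (fun _ => B) i₀ T i := fun i _ => by
    rw [Function.update_apply]; split_ifs <;> assumption
  have := setIntegral_le_of_subset_hyperbolicRegion a haj hU (by linarith)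
    (boundaryRegion_subset_hyperbolicRegion hj)
  rwa [prod_erase_apply_update_const log hj.symm, Fintype.card_fin] at this

theorem stmt_13_general (r : ℕ) (a : Fin r → ℕ) (i0 : Fin r) (ha : 1 ≤ a i0)
    (A : ℝ) (hA : 1 ≤ A) :
    ∃ C : ℝ, 0 < C ∧ ∀ B : ℝ, 3 < B →
      (∫ x in {x : Fin r → ℝ | 1 ≤ x i0 ∧ x i0 < (Real.log B) ^ A ∧
          (∀ i, i ≠ i0 → 1 ≤ x i ∧ x i ≤ B) ∧
          (∏ i ∈ Finset.univ.erase i0, x i ^ (a i)) ≤ B / x i0 ^ (a i0)},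
        ∏ i, x i ^ ((a i : ℝ) - 1))
      ≤ C * (B * (Real.log B) ^ (r - 2) * Real.log (Real.log B)
           + (Real.log B) ^ ((r : ℝ) - 1 + A * (a i0 : ℝ))) := by
  obtain ⟨n, rfl⟩ : ∃ n, r = n + 1 := ⟨r - 1, by have := i0.pos; omega⟩
  refine ⟨A, by linarith, fun B hB => ?_⟩
  have hL : 1 < log B := (lt_log_iff_exp_lt (by linarith)).2 (by linarith [exp_one_lt_d9])
  have hT : 1 ≤ log B ^ A := one_le_rpow hL.le (by linarith)
  have hloglog : 0 ≤ log (log B) := log_nonneg hL.le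
  have hB1 : 1 ≤ B := by linarith
  change ∫ x in boundaryRegion a i0 (log B ^ A) B, _ ≤ _
  by_cases h0 : ∀ i ≠ i0, a i = 0
  · calc _ ≤ (log B ^ A) ^ a i0 * log B ^ n :=
          setIntegral_boundaryRegion_le_of_forall_ne_eq_zero ha h0 (by linarith) hB1
      _ = log B ^ (((n + 1 : ℕ) : ℝ) - 1 + A * a i0) := by
          rw [← rpow_mul_natCast (by linarith), ← rpow_natCast (log B) n,
            ← rpow_add (by linarith)]
          push_cast
          ring_nf
      _ ≤ _ := (le_add_of_nonneg_left (by positivity)).trans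
          (le_mul_of_one_le_left (by positivity) hA)
  · push Not at h0
    obtain ⟨j, hji0, hj⟩ := h0
    calc _ ≤ B * (log (log B ^ A) * log B ^ (n - 1)) :=
          setIntegral_boundaryRegion_le_of_ne hji0 (Nat.one_le_iff_ne_zero.2 hj) hT hB1
      _ = A * (B * log B ^ (n + 1 - 2) * log (log B)) := by
          rw [log_rpow (by linarith), show n + 1 - 2 = n - 1 by omega]
          ring
      _ ≤ _ := mul_le_mul_of_nonneg_left (le_add_of_nonneg_right (by positivity)) (by linarith)

/-- Boundary-region integral estimate (key computation for Lemma `boundrylogBA`): with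
`a i0 ≥ 1`, the integral of `∏ᵢ xᵢ^{aᵢ-1}` over the region where `1 ≤ x_{i0} < (log B)^A`,
`1 ≤ xᵢ ≤ B` for `i ≠ i0` and `∏_{i≠i0} xᵢ^{aᵢ} ≤ B / x_{i0}^{a_{i0}}` is
`O_A(B (log B)^{r-2} log log B + (log B)^{r-1+A·a_{i0}})`. -/
theorem stmt_13 (r : ℕ) (hr : 2 ≤ r) (a : Fin r → ℕ) (i0 : Fin r) (ha : 1 ≤ a i0)
    (A : ℝ) (hA : 1 ≤ A) :
    ∃ C : ℝ, 0 < C ∧ ∀ B : ℝ, 3 < B →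
      (∫ x in {x : Fin r → ℝ | 1 ≤ x i0 ∧ x i0 < (Real.log B) ^ A ∧
          (∀ i, i ≠ i0 → 1 ≤ x i ∧ x i ≤ B) ∧
          (∏ i ∈ Finset.univ.erase i0, x i ^ (a i)) ≤ B / x i0 ^ (a i0)},
        ∏ i, x i ^ ((a i : ℝ) - 1))
      ≤ C * (B * (Real.log B) ^ (r - 2) * Real.log (Real.log B)
           + (Real.log B) ^ ((r : ℝ) - 1 + A * (a i0 : ℝ))) :=
  stmt_13_general r a i0 ha A hA
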